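/- Assume μ satisfies Assumption (D), and let X be a random variable with distribution μ. Then there exist constants θ₀ > 0 and τ < ∞ such that for every z ∈ S and every real θ with |θ| ≤ θ₀, one has E[exp(θ·(U_μ(z) − log|z − X|))] ≤ exp(τ θ²). -/

import Mathlib

/-!
For `p < ε`, Assumption (D) makes `w ↦ |z - w|^(-p)` integrable uniformly in `z`: cut the plane
into the dyadic shells `2^(-k-1) < |z - w| ≤ 2^(-k)`, of mass `O(2^(-kε))`. On the compact support
`log |z - w|` is bounded above, so `exp (p |log |z - w||) ≲ |z - w|^(-p)`, which gives a uniform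
exponential moment `E exp (p |Y|) ≤ A` for the centred variable `Y = U_μ(z) - log |z - X|`.
Finally `exp x ≤ 1 + x + x² exp |x|` turns such a moment of a mean-zero `Y` into
`E exp (θ Y) ≤ 1 + 8 A θ² / p² ≤ exp (8 A θ² / p²)` for `|θ| ≤ p / 2`.
-/

open MeasureTheory ProbabilityTheory Filter Metric

/-- Logarithmic potential of a measure on ℂ. -/
noncomputable def logPot (μ : Measure ℂ) (z : ℂ) : ℝ :=
  ∫ w, Real.log ‖z - w‖ ∂μ

/-- Topological support of a measure on ℂ. -/
def msupport (μ : Measure ℂ) : Set ℂ :=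
  {x : ℂ | ∀ U ∈ nhds x, 0 < μ U}

/-- Assumption (A): for every compact `K`, `sup_{z ∈ K} ∫ (log|z-w|)² dμ(w) < ∞`. -/
def AssumptionA (μ : Measure ℂ) : Prop :=
  ∀ K : Set ℂ, IsCompact K → ∃ C : ℝ, ∀ z ∈ K,
    ∫⁻ w, ENNReal.ofReal ((Real.log ‖z - w‖) ^ 2) ∂μ ≤ ENNReal.ofReal C

/-- Assumption (D): `μ(B(z,r)) ≤ C rᵉ` for all `z` and `r > 0`. -/
def AssumptionD (μ : Measure ℂ) : Prop :=
  ∃ C : ℝ, ∃ ε : ℝ, 0 < ε ∧ ∀ z : ℂ, ∀ r : ℝ, 0 < r →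
    μ (Metric.ball z r) ≤ ENNReal.ofReal (C * r ^ ε)

/-- The filled unit lemniscate of `p_n(z) = ∏_{k<n} (z - X k ω)`. -/
def lemniscate {Ω : Type*} (X : ℕ → Ω → ℂ) (n : ℕ) (ω : Ω) : Set ℂ :=
  {z : ℂ | ‖∏ k ∈ Finset.range n, (z - X k ω)‖ < 1}

/-- Inradius of a planar set: the sup of radii of open disks contained in it (0 if none). -/
noncomputable def inradius (U : Set ℂ) : ℝ :=
  sSup {r : ℝ | 0 < r ∧ ∃ c : ℂ, Metric.ball c r ⊆ U}

namespace Real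

lemma exp_le_one_add_add_sq_mul_exp_abs (x : ℝ) : exp x ≤ 1 + x + x ^ 2 * exp |x| := by
  have h1 : 1 ≤ exp |x| := one_le_exp (abs_nonneg x)
  rcases le_or_gt |x| 1 with hx | hx
  · have := (abs_le.1 (abs_exp_sub_one_sub_id_le hx)).2
    nlinarith [sq_nonneg x]
  rcases le_or_gt 0 x with h0 | h0
  · rw [abs_of_nonneg h0] at hx ⊢
    nlinarith [mul_nonneg (by nlinarith : (0 : ℝ) ≤ x ^ 2 - 1) (exp_pos x).le]
  · rw [abs_of_neg h0] at hx
    nlinarith [exp_le_one_iff.mpr h0.le]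

lemma sq_mul_exp_half_mul_abs_le {q : ℝ} (hq : 0 < q) (y : ℝ) :
    y ^ 2 * exp (q / 2 * |y|) ≤ 8 / q ^ 2 * exp (q * |y|) := by
  have h := pow_div_factorial_le_exp (q / 2 * |y|) (by positivity) 2
  have hy : y ^ 2 = 8 / q ^ 2 * ((q / 2 * |y|) ^ 2 / (2 : ℕ).factorial) := by
    field_simp; simp [sq_abs]; ring
  calc y ^ 2 * exp (q / 2 * |y|)
      ≤ 8 / q ^ 2 * exp (q / 2 * |y|) * exp (q / 2 * |y|) := by
        rw [hy, mul_assoc, mul_assoc]; gcongr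
    _ = 8 / q ^ 2 * exp (q * |y|) := by rw [mul_assoc, ← exp_add]; ring_nf

lemma exp_mul_le_of_abs_le {q θ : ℝ} (hq : 0 < q) (hθ : |θ| ≤ q / 2) (y : ℝ) :
    exp (θ * y) ≤ 1 + θ * y + θ ^ 2 * (8 / q ^ 2 * exp (q * |y|)) := by
  have hexp : exp |θ * y| ≤ exp (q / 2 * |y|) := by
    rw [abs_mul]; gcongr
  calc exp (θ * y) ≤ 1 + θ * y + (θ * y) ^ 2 * exp |θ * y| :=
        exp_le_one_add_add_sq_mul_exp_abs _
    _ ≤ 1 + θ * y + θ ^ 2 * (y ^ 2 * exp (q / 2 * |y|)) := by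
        rw [mul_pow, mul_assoc]; gcongr
    _ ≤ 1 + θ * y + θ ^ 2 * (8 / q ^ 2 * exp (q * |y|)) := by
        gcongr 1 + θ * y + θ ^ 2 * ?_; exact sq_mul_exp_half_mul_abs_le hq y

lemma exp_mul_abs_le_of_le {p m t : ℝ} (hp : 0 ≤ p) (hm : 0 ≤ m) (ht : t ≤ m) :
    exp (p * |t|) ≤ exp (2 * p * m) * exp (-p * t) := by
  rw [← exp_add, exp_le_exp]
  rcases le_or_gt 0 t with h0 | h0
  · rw [abs_of_nonneg h0]; nlinarith
  · rw [abs_of_neg h0]; nlinarith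

end Real

section ExponentialMoments

open Real

variable {Ω : Type*} [MeasurableSpace Ω] {P : Measure Ω}

lemma MeasureTheory.Integrable.of_integrable_exp_mul_abs {Y : Ω → ℝ} {q : ℝ} (hq : 0 < q)
    (hY : AEStronglyMeasurable Y P) (hint : Integrable (fun ω => exp (q * |Y ω|)) P) :
    Integrable Y P := by
  refine (hint.const_mul q⁻¹).mono' hY (ae_of_all _ fun ω => ?_)
  rw [norm_eq_abs, le_inv_mul_iff₀ hq]
  linarith [add_one_le_exp (q * |Y ω|)]

theorem MeasureTheory.integrable_exp_mul_abs_of_ae_le {T : Ω → ℝ} {p m B : ℝ} (hp : 0 ≤ p)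
    (hm : 0 ≤ m) (hT : AEStronglyMeasurable T P) (hle : ∀ᵐ ω ∂P, T ω ≤ m)
    (hint : Integrable (fun ω => exp (-p * T ω)) P) (hB : ∫ ω, exp (-p * T ω) ∂P ≤ B) :
    Integrable (fun ω => exp (p * |T ω|)) P ∧
      ∫ ω, exp (p * |T ω|) ∂P ≤ exp (2 * p * m) * B := by
  have hpt : ∀ᵐ ω ∂P, exp (p * |T ω|) ≤ exp (2 * p * m) * exp (-p * T ω) := by
    filter_upwards [hle] with ω hω using exp_mul_abs_le_of_le hp hm hω
  have hint' : Integrable (fun ω => exp (p * |T ω|)) P :=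
    (hint.const_mul _).mono' (by fun_prop) (by
      filter_upwards [hpt] with ω hω
      rwa [norm_of_nonneg (exp_pos _).le])
  refine ⟨hint', ?_⟩
  calc ∫ ω, exp (p * |T ω|) ∂P ≤ ∫ ω, exp (2 * p * m) * exp (-p * T ω) ∂P :=
        integral_mono_ae hint' (hint.const_mul _) hpt
    _ ≤ exp (2 * p * m) * B := by rw [integral_const_mul]; gcongr

variable [IsProbabilityMeasure P]

theorem ProbabilityTheory.mgf_le_exp_mul_sq_of_integral_exp_mul_abs_le {Y : Ω → ℝ} {q A : ℝ}
    (hq : 0 < q) (hY : AEStronglyMeasurable Y P)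
    (hint : Integrable (fun ω => exp (q * |Y ω|)) P) (hA : ∫ ω, exp (q * |Y ω|) ∂P ≤ A)
    (hmean : P[Y] = 0) {θ : ℝ} (hθ : |θ| ≤ q / 2) :
    mgf Y P θ ≤ exp (8 * A / q ^ 2 * θ ^ 2) := by
  have hY_int := hint.of_integrable_exp_mul_abs hq hY
  have hlin : Integrable (fun ω => 1 + θ * Y ω) P := (integrable_const 1).add (hY_int.const_mul θ)
  have hquad : Integrable (fun ω => θ ^ 2 * (8 / q ^ 2 * exp (q * |Y ω|))) P :=
    (hint.const_mul _).const_mul _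
  calc mgf Y P θ
      ≤ ∫ ω, 1 + θ * Y ω + θ ^ 2 * (8 / q ^ 2 * exp (q * |Y ω|)) ∂P :=
        integral_mono_of_nonneg (ae_of_all _ fun ω => (exp_pos _).le) (hlin.add hquad)
          (ae_of_all _ fun ω => exp_mul_le_of_abs_le hq hθ (Y ω))
    _ = 1 + θ ^ 2 * (8 / q ^ 2 * ∫ ω, exp (q * |Y ω|) ∂P) := by
        rw [integral_add hlin hquad, integral_add (integrable_const 1) (hY_int.const_mul θ),
          integral_const_mul, integral_const_mul, integral_const_mul]
        simp [hmean]
    _ ≤ 1 + θ ^ 2 * (8 / q ^ 2 * A) := by gcongr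
    _ ≤ exp (8 * A / q ^ 2 * θ ^ 2) := by
        rw [show θ ^ 2 * (8 / q ^ 2 * A) = 8 * A / q ^ 2 * θ ^ 2 by ring, add_comm]
        exact add_one_le_exp _

theorem ProbabilityTheory.mgf_integral_sub_le {T : Ω → ℝ} {p E : ℝ} (hp : 0 < p)
    (hT : AEStronglyMeasurable T P) (hint : Integrable (fun ω => exp (p * |T ω|)) P)
    (hE : ∫ ω, exp (p * |T ω|) ∂P ≤ E) {θ : ℝ} (hθ : |θ| ≤ p / 2) :
    mgf (fun ω => P[T] - T ω) P θ ≤ exp (8 * (exp E * E) / p ^ 2 * θ ^ 2) := by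
  have hT_int := hint.of_integrable_exp_mul_abs hp hT
  have hmean_le : p * |P[T]| ≤ E := calc
    p * |P[T]| ≤ p * ∫ ω, |T ω| ∂P := by gcongr; exact abs_integral_le_integral_abs
    _ = ∫ ω, p * |T ω| ∂P := (integral_const_mul _ _).symm
    _ ≤ ∫ ω, exp (p * |T ω|) ∂P :=
        integral_mono (hT_int.abs.const_mul p) hint fun ω => by
          linarith [add_one_le_exp (p * |T ω|)]
    _ ≤ E := hE
  have hpt : ∀ ω, exp (p * |P[T] - T ω|) ≤ exp E * exp (p * |T ω|) := fun ω => by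
    rw [← exp_add]
    gcongr
    nlinarith [abs_sub (P[T]) (T ω)]
  have hint' : Integrable (fun ω => exp (p * |P[T] - T ω|)) P :=
    (hint.const_mul (exp E)).mono' (by fun_prop)
      (ae_of_all _ fun ω => by rw [norm_of_nonneg (exp_pos _).le]; exact hpt ω)
  have hY : AEStronglyMeasurable (fun ω => P[T] - T ω) P := aestronglyMeasurable_const.sub hT
  refine mgf_le_exp_mul_sq_of_integral_exp_mul_abs_le hp hY hint' ?_ ?_ hθ
  · calc ∫ ω, exp (p * |P[T] - T ω|) ∂P ≤ ∫ ω, exp E * exp (p * |T ω|) ∂P :=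
          integral_mono hint' (hint.const_mul _) hpt
      _ ≤ exp E * E := by rw [integral_const_mul]; gcongr
  · rw [integral_sub (integrable_const _) hT_int]
    simp

end ExponentialMoments

section DyadicBound

open Real

lemma two_rpow_mul_rpow_eq_geometric {C p ε : ℝ} (j : ℕ) :
    (2 : ℝ) ^ (((j : ℝ) + 1) * p) * (C * ((2 : ℝ) ^ (1 - (j : ℝ))) ^ ε) =
      C * 2 ^ (p + ε) * ((2 : ℝ) ^ (p - ε)) ^ j := by
  rw [← rpow_mul two_pos.le, ← rpow_natCast, ← rpow_mul two_pos.le,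
    show C * (2 : ℝ) ^ (p + ε) * 2 ^ ((p - ε) * j) = C * (2 ^ (p + ε) * 2 ^ ((p - ε) * j)) by ring,
    ← rpow_add two_pos, mul_left_comm, ← rpow_add two_pos]
  ring_nf

variable {α : Type*} [PseudoMetricSpace α]

-- `exp (-p * log d)` is `d ^ (-p)` for `d > 0`, and `1` at `d = 0` since `log 0 = 0`.
lemma exp_neg_mul_log_dist_le_one_add_tsum {p : ℝ} (hp : 0 ≤ p) (z w : α) :
    ENNReal.ofReal (exp (-p * log (dist z w))) ≤
      1 + ∑' j : ℕ, (ball z ((2 : ℝ) ^ (1 - (j : ℝ)))).indicator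
        (fun _ => ENNReal.ofReal ((2 : ℝ) ^ (((j : ℝ) + 1) * p))) w := by
  set d := dist z w with hd_def
  by_cases hd : 0 < d ∧ d ≤ 1
  · obtain ⟨k, hk, hk'⟩ := exists_nat_pow_near (one_le_inv_iff₀.mpr hd) one_lt_two
    have hmem : w ∈ ball z ((2 : ℝ) ^ (1 - (k : ℝ))) := by
      rw [mem_ball, dist_comm, ← hd_def, rpow_sub two_pos, rpow_one, rpow_natCast]
      calc d ≤ ((2 : ℝ) ^ k)⁻¹ := (le_inv_comm₀ (by positivity) hd.1).mp hk
        _ < 2 / 2 ^ k := by rw [inv_eq_one_div]; gcongr; norm_num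
    have hexp : exp (-p * log d) ≤ (2 : ℝ) ^ (((k : ℝ) + 1) * p) := by
      have hlog : -log d ≤ log 2 * ((k : ℝ) + 1) := calc
        -log d = log d⁻¹ := (log_inv d).symm
        _ ≤ log ((2 : ℝ) ^ (k + 1)) := log_le_log (inv_pos.mpr hd.1) hk'.le
        _ = log 2 * ((k : ℝ) + 1) := by rw [log_pow]; push_cast; ring
      rw [rpow_def_of_pos two_pos, exp_le_exp]
      nlinarith [mul_le_mul_of_nonneg_left hlog hp]
    calc ENNReal.ofReal (exp (-p * log d))
        ≤ (ball z ((2 : ℝ) ^ (1 - (k : ℝ)))).indicator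
            (fun _ => ENNReal.ofReal ((2 : ℝ) ^ (((k : ℝ) + 1) * p))) w := by
          rw [Set.indicator_of_mem hmem]; exact ENNReal.ofReal_le_ofReal hexp
      _ ≤ _ := ENNReal.le_tsum k
      _ ≤ _ := le_add_self
  · have hlog : 0 ≤ log d := by
      rcases (dist_nonneg : 0 ≤ d).eq_or_lt with h0 | h0
      · rw [hd_def, ← h0, log_zero]
      · exact log_nonneg (not_lt.mp fun h1 => hd ⟨h0, h1.le⟩)
    refine le_trans ?_ le_self_add
    rw [ENNReal.ofReal_le_one, exp_le_one_iff]
    nlinarith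

variable [MeasurableSpace α] [OpensMeasurableSpace α] {μ : Measure α}

theorem lintegral_exp_neg_mul_log_dist_le {C ε p : ℝ} (hC : 0 ≤ C) (hp : 0 ≤ p) (hpε : p < ε)
    (z : α) (hball : ∀ r > 0, μ (ball z r) ≤ ENNReal.ofReal (C * r ^ ε)) :
    ∫⁻ w, ENNReal.ofReal (exp (-p * log (dist z w))) ∂μ ≤
      μ Set.univ + ENNReal.ofReal (C * 2 ^ (p + ε) / (1 - 2 ^ (p - ε))) := by
  have ha : (2 : ℝ) ^ (p - ε) < 1 := rpow_lt_one_of_one_lt_of_neg one_lt_two (by linarith)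
  have ha0 : 0 ≤ (2 : ℝ) ^ (p - ε) := by positivity
  calc ∫⁻ w, ENNReal.ofReal (exp (-p * log (dist z w))) ∂μ
      ≤ ∫⁻ w, 1 + ∑' j : ℕ, (ball z ((2 : ℝ) ^ (1 - (j : ℝ)))).indicator
          (fun _ => ENNReal.ofReal ((2 : ℝ) ^ (((j : ℝ) + 1) * p))) w ∂μ :=
        lintegral_mono fun w => exp_neg_mul_log_dist_le_one_add_tsum hp z w
    _ = μ Set.univ + ∑' j : ℕ, ENNReal.ofReal ((2 : ℝ) ^ (((j : ℝ) + 1) * p)) *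
          μ (ball z ((2 : ℝ) ^ (1 - (j : ℝ)))) := by
        rw [lintegral_add_left measurable_const, lintegral_const, one_mul,
          lintegral_tsum fun j => (measurable_const.indicator measurableSet_ball).aemeasurable]
        simp_rw [lintegral_indicator measurableSet_ball, setLIntegral_const]
    _ ≤ μ Set.univ + ∑' j : ℕ, ENNReal.ofReal (C * 2 ^ (p + ε) * ((2 : ℝ) ^ (p - ε)) ^ j) := by
        gcongr with j
        rw [← two_rpow_mul_rpow_eq_geometric, ENNReal.ofReal_mul (by positivity)]
        gcongr
        exact hball _ (by positivity)
    _ = μ Set.univ + ENNReal.ofReal (C * 2 ^ (p + ε) / (1 - 2 ^ (p - ε))) := by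
        rw [← ENNReal.ofReal_tsum_of_nonneg (fun j => by positivity)
          ((summable_geometric_of_lt_one ha0 ha).mul_left _), tsum_mul_left,
          tsum_geometric_of_lt_one ha0 ha, div_eq_mul_inv]

theorem integrable_exp_neg_mul_log_dist [IsFiniteMeasure μ] {C ε p : ℝ} (hC : 0 ≤ C)
    (hp : 0 ≤ p) (hpε : p < ε) (z : α)
    (hball : ∀ r > 0, μ (ball z r) ≤ ENNReal.ofReal (C * r ^ ε)) :
    Integrable (fun w => exp (-p * log (dist z w))) μ ∧
      ∫ w, exp (-p * log (dist z w)) ∂μ ≤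
        μ.real Set.univ + C * 2 ^ (p + ε) / (1 - 2 ^ (p - ε)) := by
  have hbound := lintegral_exp_neg_mul_log_dist_le hC hp hpε z hball
  have hgeom : 0 ≤ C * 2 ^ (p + ε) / (1 - 2 ^ (p - ε)) := by
    have : (2 : ℝ) ^ (p - ε) < 1 := rpow_lt_one_of_one_lt_of_neg one_lt_two (by linarith)
    have : 0 < 1 - (2 : ℝ) ^ (p - ε) := by linarith
    positivity
  rw [← ENNReal.ofReal_toReal (measure_ne_top μ Set.univ),
    ← ENNReal.ofReal_add ENNReal.toReal_nonneg hgeom] at hbound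
  have hmeas : AEStronglyMeasurable (fun w => exp (-p * log (dist z w))) μ :=
    Measurable.aestronglyMeasurable (by fun_prop)
  have hnonneg : 0 ≤ᵐ[μ] fun w => exp (-p * log (dist z w)) :=
    ae_of_all _ fun w => (exp_pos _).le
  refine ⟨⟨hmeas, (hasFiniteIntegral_iff_ofReal hnonneg).mpr
    (hbound.trans_lt ENNReal.ofReal_lt_top)⟩, ?_⟩
  rw [integral_eq_lintegral_of_nonneg_ae hnonneg hmeas]
  exact ENNReal.toReal_le_of_le_ofReal (by positivity) hbound

end DyadicBound

lemma msupport_eq_support (μ : Measure ℂ) : msupport μ = μ.support := by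
  ext z; exact (Measure.mem_support_iff_forall z).symm

lemma ae_log_norm_sub_le_log_diam (μ : Measure ℂ) (hS : IsCompact (msupport μ)) {z : ℂ}
    (hz : z ∈ msupport μ) : ∀ᵐ w ∂μ, Real.log ‖z - w‖ ≤ Real.log (diam (msupport μ) + 1) := by
  have hsupp : msupport μ ∈ ae μ := (msupport_eq_support μ) ▸ Measure.support_mem_ae
  filter_upwards [hsupp] with w hw
  have hdist : ‖z - w‖ ≤ diam (msupport μ) := by
    rw [← Complex.dist_eq]; exact dist_le_diam_of_mem hS.isBounded hz hw
  rcases (norm_nonneg (z - w)).eq_or_lt with h0 | h0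
  · rw [← h0, Real.log_zero]; exact Real.log_nonneg (by linarith [diam_nonneg (s := msupport μ)])
  · exact Real.log_le_log h0 (by linarith)

theorem statement14
    (μ : Measure ℂ) [IsProbabilityMeasure μ] (hS : IsCompact (msupport μ))
    (hD : AssumptionD μ) :
    ∃ θ₀ > (0 : ℝ), ∃ τ : ℝ, ∀ z ∈ msupport μ, ∀ θ : ℝ, |θ| ≤ θ₀ →
      ∫ w, Real.exp (θ * (logPot μ z - Real.log ‖z - w‖)) ∂μ ≤
        Real.exp (τ * θ ^ 2) := by
  obtain ⟨C, ε, hε, hball⟩ := hD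
  set p := ε / 2
  have hp : 0 < p := by positivity
  have hball' : ∀ z, ∀ r > 0, μ (ball z r) ≤ ENNReal.ofReal (max C 0 * r ^ ε) := fun z r hr =>
    (hball z r hr).trans (ENNReal.ofReal_le_ofReal (by gcongr; exact le_max_left _ _))
  set m := Real.log (diam (msupport μ) + 1)
  have hm : 0 ≤ m := Real.log_nonneg (by linarith [diam_nonneg (s := msupport μ)])
  set E := Real.exp (2 * p * m) * (μ.real Set.univ + max C 0 * 2 ^ (p + ε) / (1 - 2 ^ (p - ε)))
  refine ⟨p / 2, by positivity, 8 * (Real.exp E * E) / p ^ 2, fun z hz θ hθ => ?_⟩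
  obtain ⟨hint, hle⟩ :=
    integrable_exp_neg_mul_log_dist (le_max_right C 0) hp.le (half_lt_self hε) z (hball' z)
  simp only [Complex.dist_eq] at hint hle
  have hlog : AEStronglyMeasurable (fun w => Real.log ‖z - w‖) μ :=
    Measurable.aestronglyMeasurable (by fun_prop)
  obtain ⟨hint', hE⟩ := integrable_exp_mul_abs_of_ae_le hp.le hm hlog
    (ae_log_norm_sub_le_log_diam μ hS hz) hint hle
  exact mgf_integral_sub_le hp hlog hint' hE hθ
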